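/- For any union of finitely many disjoint closed intervals S with minimum element S_min and maximum element S_max, define the inner boundaries B'(S) as the set of all interval endpoints of S excluding S_min and S_max. Then for two such unions S₁ and S₂ with nonempty intersection, |B'(S₁ ∩ S₂)| ≤ |B'(S₁)| + |B'(S₂)|. -/
import Mathlib


/-- `S` is a union of finitely many pairwise disjoint nonempty closed intervals. -/
def IsFiniteUnionOfDisjointClosedIntervals (S : Set ℝ) : Prop :=
  ∃ (n : ℕ) (a b : Fin n → ℝ),
    (∀ i, a i ≤ b i) ∧
    (Pairwise fun i j => Disjoint (Set.Icc (a i) (b i)) (Set.Icc (a j) (b j))) ∧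
    S = ⋃ i, Set.Icc (a i) (b i)

/-- The inner boundaries of `S`: boundary points other than the minimum and maximum of `S`. -/
noncomputable def innerBoundaries (S : Set ℝ) : Set ℝ :=
  frontier S \ {sInf S, sSup S}

lemma aux_closed {S : Set ℝ} (h : IsFiniteUnionOfDisjointClosedIntervals S) :
    IsClosed S := by
  obtain ⟨n, a, b, -, -, rfl⟩ := h
  exact isClosed_iUnion_of_finite fun i => isClosed_Icc

lemma aux_bddBelow {S : Set ℝ} (h : IsFiniteUnionOfDisjointClosedIntervals S) :
    BddBelow S := by
  obtain ⟨n, a, b, -, -, rfl⟩ := h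
  rw [← Set.biUnion_univ]
  exact (Set.Finite.bddBelow_biUnion (Set.finite_univ)).2 fun i _ => bddBelow_Icc

lemma aux_bddAbove {S : Set ℝ} (h : IsFiniteUnionOfDisjointClosedIntervals S) :
    BddAbove S := by
  obtain ⟨n, a, b, -, -, rfl⟩ := h
  rw [← Set.biUnion_univ]
  exact (Set.Finite.bddAbove_biUnion (Set.finite_univ)).2 fun i _ => bddAbove_Icc

lemma aux_frontier_finite {S : Set ℝ} (h : IsFiniteUnionOfDisjointClosedIntervals S) :
    (frontier S).Finite := by
  have hcl := aux_closed h
  obtain ⟨n, a, b, hab, -, rfl⟩ := h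
  apply Set.Finite.subset (Set.finite_iUnion (fun i : Fin n => (Set.finite_singleton (a i)).union
    (Set.finite_singleton (b i))))
  intro x hx
  have hxS : x ∈ ⋃ i, Set.Icc (a i) (b i) := hcl.frontier_subset hx
  have hxni : x ∉ interior (⋃ i, Set.Icc (a i) (b i)) := hx.2
  obtain ⟨i, hxi⟩ := Set.mem_iUnion.1 hxS
  simp only [Set.mem_iUnion, Set.mem_union, Set.mem_singleton_iff]
  refine ⟨i, ?_⟩
  by_contra hcon
  push_neg at hcon
  have h1 : a i < x := lt_of_le_of_ne hxi.1 (Ne.symm hcon.1)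
  have h2 : x < b i := lt_of_le_of_ne hxi.2 hcon.2
  exact hxni (interior_mono (Set.subset_iUnion _ i)
    (by rw [interior_Icc]; exact ⟨h1, h2⟩))

theorem stmt_0 (S₁ S₂ : Set ℝ)
    (h₁ : IsFiniteUnionOfDisjointClosedIntervals S₁)
    (h₂ : IsFiniteUnionOfDisjointClosedIntervals S₂)
    (hne : (S₁ ∩ S₂).Nonempty) :
    (innerBoundaries (S₁ ∩ S₂)).ncard ≤
      (innerBoundaries S₁).ncard + (innerBoundaries S₂).ncard := by
  have hc1 := aux_closed h₁
  have hc2 := aux_closed h₂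
  have hbb1 := aux_bddBelow h₁
  have hbb2 := aux_bddBelow h₂
  have hba1 := aux_bddAbove h₁
  have hba2 := aux_bddAbove h₂
  have hbbI : BddBelow (S₁ ∩ S₂) := hbb1.mono Set.inter_subset_left
  have hbaI : BddAbove (S₁ ∩ S₂) := hba1.mono Set.inter_subset_left
  have hf1 : (innerBoundaries S₁).Finite :=
    (aux_frontier_finite h₁).subset Set.diff_subset
  have hf2 : (innerBoundaries S₂).Finite :=
    (aux_frontier_finite h₂).subset Set.diff_subset
  have hsub : innerBoundaries (S₁ ∩ S₂) ⊆ innerBoundaries S₁ ∪ innerBoundaries S₂ := by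
    rintro x ⟨hxf, hxns⟩
    simp only [Set.mem_insert_iff, Set.mem_singleton_iff, not_or] at hxns
    obtain ⟨hni, hns⟩ := hxns
    have hxmem : x ∈ S₁ ∩ S₂ := (hc1.inter hc2).frontier_subset hxf
    -- key facts
    have key_inf : ∀ T : Set ℝ, BddBelow T → x ≠ sInf T → S₁ ∩ S₂ ⊆ T → x ≠ sInf (S₁ ∩ S₂) →
        True := fun _ _ _ _ _ => trivial
    have hxfr : x ∈ frontier S₁ ∪ frontier S₂ := by
      have := frontier_inter_subset S₁ S₂ hxf
      rcases this with h | h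
      · exact Or.inl h.1
      · exact Or.inr h.2
    have main : ∀ T : Set ℝ, BddBelow T → BddAbove T → S₁ ∩ S₂ ⊆ T →
        x ∈ frontier T → x ∈ innerBoundaries T := by
      intro T hTb hTa hsubT hxT
      refine ⟨hxT, ?_⟩
      simp only [Set.mem_insert_iff, Set.mem_singleton_iff, not_or]
      constructor
      · intro heq
        apply hni
        refine le_antisymm (le_csInf hne fun y hy => ?_) (csInf_le hbbI hxmem)
        rw [heq]
        exact csInf_le hTb (hsubT hy)
      · intro heq
        apply hns
        refine le_antisymm (le_csSup hbaI hxmem) (csSup_le hne fun y hy => ?_)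
        rw [heq]
        exact le_csSup hTa (hsubT hy)
    rcases hxfr with h | h
    · exact Or.inl (main S₁ hbb1 hba1 Set.inter_subset_left h)
    · exact Or.inr (main S₂ hbb2 hba2 Set.inter_subset_right h)
  calc (innerBoundaries (S₁ ∩ S₂)).ncard
      ≤ (innerBoundaries S₁ ∪ innerBoundaries S₂).ncard :=
        Set.ncard_le_ncard hsub (hf1.union hf2)
    _ ≤ (innerBoundaries S₁).ncard + (innerBoundaries S₂).ncard := Set.ncard_union_le _ _
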